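/- Let $X$ be a rack and $B$ its differential graded bialgebra. There is an isomorphism of left $A$-modules $B \cong A \otimes_k T(X)$, where $T(X)$ is the free unital $k$-algebra on $X$: every element of $B$ can be written uniquely as a $k$-linear combination of monomials of the form $a \cdot e_{x_1} \cdots e_{x_n}$ with $a$ a monomial in the degree-zero generators. -/

import Mathlib

open scoped TensorProduct

/-- A rack: a set with a binary operation `act x y = x ◁ y` such that right
translations are bijective and right self-distributivity holds. -/
structure RackS (X : Type*) where
  act : X → X → X
  bij : ∀ y : X, Function.Bijective fun x => act x y
  distrib : ∀ x y z : X, act (act x y) z = act (act x z) (act y z)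

/-- The relations `y * x^y = x * y` and `y * e_{x^y} = e_x * y` defining the
dg bialgebra `B(X)`; the left copy of `X` (via `Sum.inl`) gives the degree-zero
generators `x`, the right copy (via `Sum.inr`) the degree-one generators `e_x`. -/
inductive Brel (k : Type*) [CommRing k] {X : Type*} (R : RackS X) :
    FreeAlgebra k (X ⊕ X) → FreeAlgebra k (X ⊕ X) → Prop
  | comm (x y : X) : Brel k R
      (FreeAlgebra.ι k (Sum.inl y) * FreeAlgebra.ι k (Sum.inl (R.act x y)))
      (FreeAlgebra.ι k (Sum.inl x) * FreeAlgebra.ι k (Sum.inl y))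
  | eact (x y : X) : Brel k R
      (FreeAlgebra.ι k (Sum.inl y) * FreeAlgebra.ι k (Sum.inr (R.act x y)))
      (FreeAlgebra.ι k (Sum.inr x) * FreeAlgebra.ι k (Sum.inl y))

/-- The algebra `B = k⟨x, e_y : x,y ∈ X⟩ / ⟨y x^y - x y, y e_{x^y} - e_x y⟩`. -/
abbrev BAlg (k : Type*) [CommRing k] {X : Type*} (R : RackS X) := RingQuot (Brel k R)

variable (k : Type*) [CommRing k] {X : Type*} (R : RackS X)

/-- The degree-zero generator `x` of `B`. -/
noncomputable def gg (x : X) : BAlg k R :=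
  RingQuot.mkAlgHom k (Brel k R) (FreeAlgebra.ι k (Sum.inl x))

/-- The degree-one generator `e_x` of `B`. -/
noncomputable def ee (x : X) : BAlg k R :=
  RingQuot.mkAlgHom k (Brel k R) (FreeAlgebra.ι k (Sum.inr x))

/-- The degree-`n` homogeneous component of `B`: the span of images of monomials in the
generators containing exactly `n` of the degree-one generators `e_x`. -/
def Bdeg (n : ℕ) : Submodule k (BAlg k R) :=
  Submodule.span k {z | ∃ l : List (X ⊕ X), l.countP (fun s => s.isRight) = n ∧
    z = (l.map (Sum.elim (gg k R) (ee k R))).prod}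

/-- `d` is the superderivation of degree `-1` of `B` with `d(x) = 0`, `d(e_x) = 1 - x`:
it satisfies the graded Leibniz rule `d(ab) = d(a)b + (-1)^{|a|} a d(b)` for `a`
homogeneous of degree `m`. -/
def IsBDeriv (d : BAlg k R →ₗ[k] BAlg k R) : Prop :=
  (∀ (m : ℕ) (a b : BAlg k R), a ∈ Bdeg k R m →
      d (a * b) = d a * b + ((-1 : k) ^ m) • (a * d b)) ∧
  (∀ x : X, d (gg k R x) = 0) ∧
  (∀ x : X, d (ee k R x) = 1 - gg k R x)

/-- `μ` is the Koszul-signed multiplication on `B ⊗ B`: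
`(a ⊗ b)(a' ⊗ b') = (-1)^{|b||a'|} (a a') ⊗ (b b')` for `b, a'` homogeneous. -/
def IsKoszulMul
    (μ : BAlg k R ⊗[k] BAlg k R →ₗ[k] BAlg k R ⊗[k] BAlg k R →ₗ[k] BAlg k R ⊗[k] BAlg k R) :
    Prop :=
  ∀ (m n : ℕ) (a b a' b' : BAlg k R), b ∈ Bdeg k R m → a' ∈ Bdeg k R n →
    μ (a ⊗ₜ b) (a' ⊗ₜ b') = ((-1 : k) ^ (m * n)) • ((a * a') ⊗ₜ[k] (b * b'))

/-- `Δ : B → B ⊗ B` is the comultiplication: a unital multiplicative map (for the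
Koszul-signed multiplication `μ` on `B ⊗ B`) with `Δ(x) = x ⊗ x` and
`Δ(e_x) = e_x ⊗ x + 1 ⊗ e_x`. -/
def IsBCoprod
    (μ : BAlg k R ⊗[k] BAlg k R →ₗ[k] BAlg k R ⊗[k] BAlg k R →ₗ[k] BAlg k R ⊗[k] BAlg k R)
    (Δ : BAlg k R →ₗ[k] BAlg k R ⊗[k] BAlg k R) : Prop :=
  Δ 1 = 1 ⊗ₜ 1 ∧
  (∀ a b : BAlg k R, Δ (a * b) = μ (Δ a) (Δ b)) ∧
  (∀ x : X, Δ (gg k R x) = gg k R x ⊗ₜ gg k R x) ∧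
  (∀ x : X, Δ (ee k R x) = ee k R x ⊗ₜ gg k R x + 1 ⊗ₜ ee k R x)

/-- The relations `y * (x ◁ y) = x * y` defining the rack algebra `A = k⟨X⟩/⟨y x^y - x y⟩`. -/
inductive Arel (k : Type*) [CommRing k] {X : Type*} (R : RackS X) :
    FreeAlgebra k X → FreeAlgebra k X → Prop
  | rel (x y : X) : Arel k R
      (FreeAlgebra.ι k y * FreeAlgebra.ι k (R.act x y))
      (FreeAlgebra.ι k x * FreeAlgebra.ι k y)

/-- The rack algebra `A(X) = k⟨X⟩/⟨y x^y - x y⟩`. -/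
abbrev RackAlg (k : Type*) [CommRing k] {X : Type*} (R : RackS X) := RingQuot (Arel k R)

/-- The canonical algebra map `A → B` sending each generator `x` to `x`, identifying
`A` with the subalgebra of `B` generated by the degree-zero generators. -/
noncomputable def AtoB (k : Type*) [CommRing k] {X : Type*} (R : RackS X) :
    RackAlg k R →ₐ[k] BAlg k R :=
  RingQuot.liftAlgHom k ⟨FreeAlgebra.lift k (fun x => gg k R x), by
    intro u v h
    induction h with
    | rel x y =>
      simp only [map_mul, FreeAlgebra.lift_ι_apply]
      simp only [gg, ← map_mul]
      exact RingQuot.mkAlgHom_rel k (Brel.comm x y)⟩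

/-- `B` as a left `A`-module, via the map `A → B` and left multiplication. -/
noncomputable instance (k : Type*) [CommRing k] {X : Type*} (R : RackS X) :
    Module (RackAlg k R) (BAlg k R) :=
  Module.compHom (BAlg k R) (AtoB k R).toRingHom

noncomputable def gA (x : X) : RackAlg k R :=
  RingQuot.mkAlgHom k (Arel k R) (FreeAlgebra.ι k x)

def sig (y : X) : Function.End X := fun z => R.act z y

noncomputable def Psi : RackAlg k R →ₐ[k] (RackAlg k R ⊗[k] MonoidAlgebra k (Function.End X)ᵐᵒᵖ) :=
  RingQuot.liftAlgHom k ⟨FreeAlgebra.lift k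
    (fun y => gA k R y ⊗ₜ MonoidAlgebra.of k (Function.End X)ᵐᵒᵖ (MulOpposite.op (sig R y))), by
    intro u v h
    induction h with
    | rel x y =>
      have h1 : gA k R y * gA k R (R.act x y) = gA k R x * gA k R y := by
        simp only [gA, ← map_mul]
        exact RingQuot.mkAlgHom_rel k (Arel.rel x y)
      have h2 : sig R (R.act x y) * sig R y = sig R y * sig R x := by
        funext z
        exact (R.distrib z x y).symm
      rw [map_mul, map_mul]
      simp only [FreeAlgebra.lift_ι_apply, Algebra.TensorProduct.tmul_mul_tmul, ← map_mul,
        ← MulOpposite.op_mul]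
      rw [h1, h2]⟩

noncomputable def Pm (x : X) :
    MonoidAlgebra k (Function.End X)ᵐᵒᵖ →ₗ[k] FreeAlgebra k X :=
  (Finsupp.lift (FreeAlgebra k X) k (Function.End X)ᵐᵒᵖ
    (fun g => FreeAlgebra.ι k (g.unop x))).comp (MonoidAlgebra.coeffLinearEquiv k).toLinearMap

lemma Pm_single (x : X) (g : (Function.End X)ᵐᵒᵖ) (c : k) :
    Pm k (X := X) x (MonoidAlgebra.single g c) = c • FreeAlgebra.ι k (g.unop x) := by
  rw [Pm, LinearMap.comp_apply, LinearEquiv.coe_coe, MonoidAlgebra.coeffLinearEquiv_apply,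
    MonoidAlgebra.coeff_single]
  erw [Finsupp.lift_apply, Finsupp.sum_single_index]
  simp

noncomputable def Fx (x : X) :
    RackAlg k R →ₗ[k] (RackAlg k R ⊗[k] FreeAlgebra k X) :=
  (LinearMap.lTensor (RackAlg k R) (Pm k x)).comp (Psi k R).toLinearMap

lemma Psi_gA (y : X) : Psi k R (gA k R y) =
    gA k R y ⊗ₜ MonoidAlgebra.of k (Function.End X)ᵐᵒᵖ (MulOpposite.op (sig R y)) := by
  simp only [gA, Psi]
  rw [RingQuot.liftAlgHom_mkAlgHom_apply, FreeAlgebra.lift_ι_apply]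

lemma Fx_one (x : X) : Fx k R x 1 = 1 ⊗ₜ FreeAlgebra.ι k x := by
  have : (Psi k R) 1 = (1 : RackAlg k R) ⊗ₜ
      (MonoidAlgebra.single (1 : (Function.End X)ᵐᵒᵖ) (1 : k)) := by
    rw [map_one]; rfl
  rw [Fx, LinearMap.comp_apply, AlgHom.toLinearMap_apply, this, LinearMap.lTensor_tmul]
  rw [show (MonoidAlgebra.single (1 : (Function.End X)ᵐᵒᵖ) (1:k)) = MonoidAlgebra.single 1 1 from rfl,
    Pm_single, one_smul]
  rfl

noncomputable def Ex (x : X) :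
    (RackAlg k R ⊗[k] FreeAlgebra k X) →ₗ[k] (RackAlg k R ⊗[k] FreeAlgebra k X) :=
  (LinearMap.lTensor (RackAlg k R) (LinearMap.mul' k (FreeAlgebra k X))).comp
    (((TensorProduct.assoc k (RackAlg k R) (FreeAlgebra k X) (FreeAlgebra k X)).toLinearMap).comp
      (LinearMap.rTensor (FreeAlgebra k X) (Fx k R x)))

lemma Ex_tmul (x : X) (a : RackAlg k R) (t : FreeAlgebra k X) :
    Ex k R x (a ⊗ₜ t) =
      (LinearMap.lTensor (RackAlg k R) (LinearMap.mul' k (FreeAlgebra k X)))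
        ((TensorProduct.assoc k (RackAlg k R) (FreeAlgebra k X) (FreeAlgebra k X))
          ((Fx k R x a) ⊗ₜ t)) := by
  simp [Ex]

noncomputable def Lmul : RackAlg k R →ₐ[k] Module.End k (RackAlg k R ⊗[k] FreeAlgebra k X) :=
  Algebra.lsmul k k (RackAlg k R ⊗[k] FreeAlgebra k X)

lemma smul_tmul_eq (a b : RackAlg k R) (t : FreeAlgebra k X) :
    a • (b ⊗ₜ[k] t) = (a * b) ⊗ₜ t := by
  rw [TensorProduct.smul_tmul', smul_eq_mul]

lemma Fx_twist (x y : X) (a : RackAlg k R) :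
    Fx k R x (gA k R y * a) =
      LinearMap.rTensor (FreeAlgebra k X) (LinearMap.mulLeft k (gA k R y))
        (Fx k R (R.act x y) a) := by
  have key : ∀ z : RackAlg k R ⊗[k] MonoidAlgebra k (Function.End X)ᵐᵒᵖ,
      (LinearMap.lTensor (RackAlg k R) (Pm k x))
        ((gA k R y ⊗ₜ MonoidAlgebra.of k (Function.End X)ᵐᵒᵖ (MulOpposite.op (sig R y))) * z) =
      LinearMap.rTensor (FreeAlgebra k X) (LinearMap.mulLeft k (gA k R y))
        ((LinearMap.lTensor (RackAlg k R) (Pm k (R.act x y))) z) := by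
    intro z
    induction z using TensorProduct.induction_on with
    | zero => simp
    | add u v hu hv => rw [mul_add, map_add, map_add, map_add, hu, hv]
    | tmul b m =>
      induction m using MonoidAlgebra.induction_on with
      | of g =>
        rw [Algebra.TensorProduct.tmul_mul_tmul, LinearMap.lTensor_tmul,
          LinearMap.lTensor_tmul, LinearMap.rTensor_tmul]
        rw [show (MonoidAlgebra.of k (Function.End X)ᵐᵒᵖ) (MulOpposite.op (sig R y)) *
            (MonoidAlgebra.of k (Function.End X)ᵐᵒᵖ) g =
            MonoidAlgebra.single (MulOpposite.op (sig R y) * g) 1 by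
          rw [← map_mul]; rfl]
        rw [show (MonoidAlgebra.of k (Function.End X)ᵐᵒᵖ) g = MonoidAlgebra.single g 1 from rfl]
        rw [Pm_single, Pm_single, one_smul, one_smul, LinearMap.mulLeft_apply]
        congr 1
      | add f g hf hg =>
        rw [TensorProduct.tmul_add, mul_add, map_add, map_add, map_add, hf, hg]
      | smul c f hf =>
        rw [TensorProduct.tmul_smul, mul_smul_comm, map_smul, map_smul, map_smul, hf]
  rw [Fx, LinearMap.comp_apply, AlgHom.toLinearMap_apply, map_mul, Psi_gA]
  exact key ((Psi k R) a)

set_option maxHeartbeats 1000000 in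
set_option synthInstance.maxHeartbeats 400000 in
lemma assoc_comm (f : RackAlg k R →ₗ[k] RackAlg k R)
    (u : RackAlg k R ⊗[k] FreeAlgebra k X) (t : FreeAlgebra k X) :
    (LinearMap.lTensor (RackAlg k R) (LinearMap.mul' k (FreeAlgebra k X)))
      ((TensorProduct.assoc k (RackAlg k R) (FreeAlgebra k X) (FreeAlgebra k X))
        ((LinearMap.rTensor (FreeAlgebra k X) f u) ⊗ₜ t)) =
    LinearMap.rTensor (FreeAlgebra k X) f
      ((LinearMap.lTensor (RackAlg k R) (LinearMap.mul' k (FreeAlgebra k X)))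
        ((TensorProduct.assoc k (RackAlg k R) (FreeAlgebra k X) (FreeAlgebra k X)) (u ⊗ₜ t))) := by
  induction u using TensorProduct.induction_on with
  | zero => simp
  | add u v hu hv =>
    simp only [map_add, TensorProduct.add_tmul, hu, hv]
  | tmul b z => simp

lemma Lmul_tmul (a b : RackAlg k R) (t : FreeAlgebra k X) :
    Lmul k R a (b ⊗ₜ[k] t) = (a * b) ⊗ₜ t := by
  rw [show Lmul k R a (b ⊗ₜ[k] t) = a • (b ⊗ₜ[k] t) from rfl, smul_tmul_eq]

lemma Lmul_eq_rTensor (a : RackAlg k R) (m : RackAlg k R ⊗[k] FreeAlgebra k X) :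
    Lmul k R a m = LinearMap.rTensor (FreeAlgebra k X) (LinearMap.mulLeft k a) m := by
  induction m using TensorProduct.induction_on with
  | zero => simp
  | add u v hu hv => rw [map_add, map_add, hu, hv]
  | tmul b t' => rw [Lmul_tmul, LinearMap.rTensor_tmul, LinearMap.mulLeft_apply]

lemma Ex_Lmul_comm (x y : X) :
    Lmul k R (gA k R y) * Ex k R (R.act x y) = Ex k R x * Lmul k R (gA k R y) := by
  apply LinearMap.ext
  intro m
  induction m using TensorProduct.induction_on with
  | zero => simp
  | add u v hu hv =>
    rw [Module.End.mul_apply, Module.End.mul_apply] at hu hv ⊢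
    rw [map_add, map_add, map_add, map_add, hu, hv]
  | tmul a t =>
    rw [Module.End.mul_apply, Module.End.mul_apply]
    simp only [Lmul_eq_rTensor]
    rw [LinearMap.rTensor_tmul, LinearMap.mulLeft_apply, Ex_tmul, Ex_tmul, Fx_twist, assoc_comm]

noncomputable def rho : BAlg k R →ₐ[k] Module.End k (RackAlg k R ⊗[k] FreeAlgebra k X) :=
  RingQuot.liftAlgHom k ⟨FreeAlgebra.lift k
    (Sum.elim (fun x => Lmul k R (gA k R x)) (fun x => Ex k R x)), by
    intro u v h
    induction h with
    | comm x y =>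
      rw [map_mul, map_mul]
      simp only [FreeAlgebra.lift_ι_apply, Sum.elim_inl]
      rw [← map_mul, ← map_mul]
      congr 1
      simp only [gA, ← map_mul]
      exact RingQuot.mkAlgHom_rel k (Arel.rel x y)
    | eact x y =>
      rw [map_mul, map_mul]
      simp only [FreeAlgebra.lift_ι_apply, Sum.elim_inl, Sum.elim_inr]
      exact Ex_Lmul_comm k R x y⟩

lemma rho_gg (x : X) : rho k R (gg k R x) = Lmul k R (gA k R x) := by
  rw [gg, rho, RingQuot.liftAlgHom_mkAlgHom_apply, FreeAlgebra.lift_ι_apply, Sum.elim_inl]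

lemma rho_ee (x : X) : rho k R (ee k R x) = Ex k R x := by
  rw [ee, rho, RingQuot.liftAlgHom_mkAlgHom_apply, FreeAlgebra.lift_ι_apply, Sum.elim_inr]

noncomputable def TtoB : FreeAlgebra k X →ₐ[k] BAlg k R :=
  FreeAlgebra.lift k (fun x => ee k R x)

noncomputable def Ep : (RackAlg k R ⊗[k] FreeAlgebra k X) →ₗ[k] BAlg k R :=
  TensorProduct.lift (LinearMap.mk₂ k (fun a t => AtoB k R a * TtoB k R t)
    (fun a b t => by rw [map_add, add_mul])
    (fun c a t => by rw [map_smul, smul_mul_assoc])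
    (fun a t s => by rw [map_add, mul_add])
    (fun c a t => by rw [map_smul, mul_smul_comm]))

lemma Ep_tmul (a : RackAlg k R) (t : FreeAlgebra k X) :
    Ep k R (a ⊗ₜ t) = AtoB k R a * TtoB k R t := rfl

lemma AtoB_gA (x : X) : AtoB k R (gA k R x) = gg k R x := by
  rw [gA, AtoB, RingQuot.liftAlgHom_mkAlgHom_apply, FreeAlgebra.lift_ι_apply]

lemma span_mon_mul {S : Type*} [Ring S] [Algebra k S] {Y : Type*} (g : Y → S)
    {u v : S} (hu : u ∈ Submodule.span k {z | ∃ l : List Y, z = (l.map g).prod})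
    (hv : v ∈ Submodule.span k {z | ∃ l : List Y, z = (l.map g).prod}) :
    u * v ∈ Submodule.span k {z | ∃ l : List Y, z = (l.map g).prod} := by
  induction hu using Submodule.span_induction with
  | mem u hu =>
    induction hv using Submodule.span_induction with
    | mem v hv =>
      obtain ⟨l₁, rfl⟩ := hu
      obtain ⟨l₂, rfl⟩ := hv
      apply Submodule.subset_span
      exact ⟨l₁ ++ l₂, by rw [List.map_append, List.prod_append]⟩
    | zero => rw [mul_zero]; exact Submodule.zero_mem _
    | add v w _ _ hv hw => rw [mul_add]; exact Submodule.add_mem _ hv hw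
    | smul c v _ hv => rw [mul_smul_comm]; exact Submodule.smul_mem _ _ hv
  | zero => rw [zero_mul]; exact Submodule.zero_mem _
  | add u w _ _ hu' hw' => rw [add_mul]; exact Submodule.add_mem _ hu' hw'
  | smul c u _ hu' => rw [smul_mul_assoc]; exact Submodule.smul_mem _ _ hu'

lemma A_mem (a : RackAlg k R) :
    a ∈ Submodule.span k {z | ∃ l : List X, z = (l.map (gA k R)).prod} := by
  obtain ⟨u, rfl⟩ := RingQuot.mkAlgHom_surjective k (Arel k R) a
  induction u using FreeAlgebra.induction with
  | grade0 r =>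
    rw [AlgHom.commutes, Algebra.algebraMap_eq_smul_one]
    refine Submodule.smul_mem _ _ (Submodule.subset_span ⟨[], by simp⟩)
  | grade1 x =>
    exact Submodule.subset_span ⟨[x], by simp [gA]⟩
  | mul u v hu hv => rw [map_mul]; exact span_mon_mul k _ hu hv
  | add u v hu hv => rw [map_add]; exact Submodule.add_mem _ hu hv

lemma T_mem (t : FreeAlgebra k X) :
    t ∈ Submodule.span k {z | ∃ l : List X, z = (l.map (FreeAlgebra.ι k)).prod} := by
  induction t using FreeAlgebra.induction with
  | grade0 r =>
    rw [Algebra.algebraMap_eq_smul_one]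
    exact Submodule.smul_mem _ _ (Submodule.subset_span ⟨[], by simp⟩)
  | grade1 x => exact Submodule.subset_span ⟨[x], by simp⟩
  | mul u v hu hv => exact span_mon_mul k _ hu hv
  | add u v hu hv => exact Submodule.add_mem _ hu hv

lemma Ep_rTensor_mulLeft (a : RackAlg k R) (m : RackAlg k R ⊗[k] FreeAlgebra k X) :
    Ep k R (LinearMap.rTensor (FreeAlgebra k X) (LinearMap.mulLeft k a) m) =
      AtoB k R a * Ep k R m := by
  induction m using TensorProduct.induction_on with
  | zero => simp
  | add u v hu hv => rw [map_add, map_add, map_add, mul_add, hu, hv]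
  | tmul b t =>
    rw [LinearMap.rTensor_tmul, LinearMap.mulLeft_apply, Ep_tmul, Ep_tmul, map_mul, mul_assoc]

lemma gg_ee_rel (x y : X) :
    gg k R y * ee k R (R.act x y) = ee k R x * gg k R y := by
  simp only [gg, ee, ← map_mul]
  exact RingQuot.mkAlgHom_rel k (Brel.eact x y)

lemma TtoB_ι (x : X) : TtoB k R (FreeAlgebra.ι k x) = ee k R x := by
  rw [TtoB, FreeAlgebra.lift_ι_apply]

lemma Ep_Fx (a : RackAlg k R) (x : X) :
    Ep k R (Fx k R x a) = ee k R x * AtoB k R a := by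
  have h := A_mem k R a
  induction h using Submodule.span_induction generalizing x with
  | mem a ha =>
    obtain ⟨l, rfl⟩ := ha
    induction l generalizing x with
    | nil =>
      simp only [List.map_nil, List.prod_nil]
      rw [Fx_one, Ep_tmul, map_one, one_mul, TtoB_ι, mul_one]
    | cons y l ih =>
      rw [List.map_cons, List.prod_cons, Fx_twist, Ep_rTensor_mulLeft, ih, map_mul, AtoB_gA,
        ← mul_assoc, gg_ee_rel, mul_assoc]
  | zero => rw [map_zero, map_zero, map_zero, mul_zero]
  | add u v _ _ hu hv => rw [map_add, map_add, map_add, mul_add, hu, hv]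
  | smul c u _ hu => rw [map_smul, map_smul, map_smul, mul_smul_comm, hu]

set_option maxHeartbeats 1000000 in
set_option synthInstance.maxHeartbeats 400000 in
lemma Ep_mul_assoc_lemma (u : RackAlg k R ⊗[k] FreeAlgebra k X) (t : FreeAlgebra k X) :
    Ep k R ((LinearMap.lTensor (RackAlg k R) (LinearMap.mul' k (FreeAlgebra k X)))
      ((TensorProduct.assoc k (RackAlg k R) (FreeAlgebra k X) (FreeAlgebra k X)) (u ⊗ₜ t))) =
    Ep k R u * TtoB k R t := by
  induction u using TensorProduct.induction_on with
  | zero => simp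
  | add u v hu hv =>
    simp only [TensorProduct.add_tmul, map_add, hu, hv, add_mul]
  | tmul a z =>
    simp only [TensorProduct.assoc_tmul, LinearMap.lTensor_tmul, LinearMap.mul'_apply]
    rw [Ep_tmul, Ep_tmul, map_mul, mul_assoc]

lemma Ep_Ex (x : X) (m : RackAlg k R ⊗[k] FreeAlgebra k X) :
    Ep k R (Ex k R x m) = ee k R x * Ep k R m := by
  induction m using TensorProduct.induction_on with
  | zero => simp
  | add u v hu hv => rw [map_add, map_add, map_add, mul_add, hu, hv]
  | tmul a t =>
    rw [Ex_tmul, Ep_mul_assoc_lemma, Ep_Fx, Ep_tmul, mul_assoc]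

lemma Ep_rho (z : BAlg k R) (m : RackAlg k R ⊗[k] FreeAlgebra k X) :
    Ep k R (rho k R z m) = z * Ep k R m := by
  obtain ⟨u, rfl⟩ := RingQuot.mkAlgHom_surjective k (Brel k R) z
  induction u using FreeAlgebra.induction generalizing m with
  | grade0 r =>
    rw [AlgHom.commutes, AlgHom.commutes, Algebra.algebraMap_eq_smul_one,
      Algebra.algebraMap_eq_smul_one (A := BAlg k R)]
    rw [LinearMap.smul_apply, Module.End.one_apply, map_smul, smul_mul_assoc, one_mul]
  | grade1 s =>
    cases s with
    | inl x =>
      rw [show RingQuot.mkAlgHom k (Brel k R) (FreeAlgebra.ι k (Sum.inl x)) = gg k R x from rfl,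
        rho_gg, Lmul_eq_rTensor, Ep_rTensor_mulLeft, AtoB_gA]
    | inr x =>
      rw [show RingQuot.mkAlgHom k (Brel k R) (FreeAlgebra.ι k (Sum.inr x)) = ee k R x from rfl,
        rho_ee, Ep_Ex]
  | mul u v hu hv =>
    rw [map_mul, map_mul, Module.End.mul_apply, hu, hv, mul_assoc]
  | add u v hu hv =>
    rw [map_add, map_add, LinearMap.add_apply, map_add, add_mul, hu, hv]

lemma rho_AtoB : (rho k R).comp (AtoB k R) =
    Algebra.lsmul k k (RackAlg k R ⊗[k] FreeAlgebra k X) := by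
  apply RingQuot.ringQuot_ext'
  apply FreeAlgebra.hom_ext
  funext x
  show rho k R (AtoB k R (RingQuot.mkAlgHom k (Arel k R) (FreeAlgebra.ι k x))) = _
  rw [show RingQuot.mkAlgHom k (Arel k R) (FreeAlgebra.ι k x) = gA k R x from rfl,
    AtoB_gA, rho_gg]
  rfl

lemma rho_AtoB_apply (a : RackAlg k R) (m : RackAlg k R ⊗[k] FreeAlgebra k X) :
    rho k R (AtoB k R a) m = a • m := by
  rw [show rho k R (AtoB k R a) = (rho k R).comp (AtoB k R) a from rfl, rho_AtoB]
  rfl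

lemma rho_Tmon (l : List X) :
    rho k R (TtoB k R (l.map (FreeAlgebra.ι k)).prod) ((1 : RackAlg k R) ⊗ₜ 1) =
      1 ⊗ₜ (l.map (FreeAlgebra.ι k)).prod := by
  induction l with
  | nil => simp
  | cons x l ih =>
    rw [List.map_cons, List.prod_cons, map_mul, map_mul, Module.End.mul_apply, ih, TtoB_ι, rho_ee,
      Ex_tmul, Fx_one]
    simp only [TensorProduct.assoc_tmul, LinearMap.lTensor_tmul, LinearMap.mul'_apply]

lemma smulB (a : RackAlg k R) (z : BAlg k R) : a • z = AtoB k R a * z := rfl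

lemma smulM (a : RackAlg k R) (m : RackAlg k R ⊗[k] FreeAlgebra k X) :
    a • m = LinearMap.rTensor (FreeAlgebra k X) (LinearMap.mulLeft k a) m := by
  induction m using TensorProduct.induction_on with
  | zero => simp
  | add u v hu hv => rw [smul_add, map_add, hu, hv]
  | tmul b t => rw [smul_tmul_eq, LinearMap.rTensor_tmul, LinearMap.mulLeft_apply]

lemma inv_Ep (m : RackAlg k R ⊗[k] FreeAlgebra k X) :
    rho k R (Ep k R m) ((1 : RackAlg k R) ⊗ₜ 1) = m := by
  induction m using TensorProduct.induction_on with
  | zero => simp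
  | add u v hu hv => rw [map_add, map_add, LinearMap.add_apply, hu, hv]
  | tmul a t =>
    have ht := T_mem k t
    induction ht using Submodule.span_induction with
    | mem t htm =>
      obtain ⟨l, rfl⟩ := htm
      rw [Ep_tmul, map_mul, Module.End.mul_apply, rho_Tmon, rho_AtoB_apply, smul_tmul_eq,
        mul_one]
    | zero => rw [TensorProduct.tmul_zero, map_zero, map_zero, LinearMap.zero_apply]
    | add t s _ _ ht hs =>
      rw [TensorProduct.tmul_add, map_add, map_add, LinearMap.add_apply, ht, hs]
    | smul c t _ ht =>
      rw [TensorProduct.tmul_smul, map_smul, map_smul, LinearMap.smul_apply, ht]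

lemma Ep_inv (z : BAlg k R) : Ep k R (rho k R z ((1 : RackAlg k R) ⊗ₜ 1)) = z := by
  rw [Ep_rho, Ep_tmul, map_one, map_one, mul_one, mul_one]

lemma TtoB_mon (l : List X) :
    TtoB k R (l.map (FreeAlgebra.ι k)).prod = (l.map (ee k R)).prod := by
  induction l with
  | nil => simp
  | cons x l ih =>
    rw [List.map_cons, List.map_cons, List.prod_cons, List.prod_cons, map_mul, TtoB_ι, ih]


/-- `B ≅ A ⊗ₖ T(X)` as left `A`-modules, where `T(X)` is the free unital algebra on `X`:
there is an `A`-linear isomorphism sending `a ⊗ (x_1 ⋯ x_n)` to `a · e_{x_1} ⋯ e_{x_n}`;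
in particular every element of `B` is uniquely a `k`-linear combination of elements
`a · e_{x_1} ⋯ e_{x_n}` with `a` a monomial in the degree-zero generators. -/
theorem BAlg_iso_A_tensor_TX (k : Type*) [CommRing k] {X : Type*} (R : RackS X) :
    ∃ E : (RackAlg k R ⊗[k] FreeAlgebra k X) ≃ₗ[RackAlg k R] BAlg k R,
      ∀ (a : RackAlg k R) (l : List X),
        E (a ⊗ₜ (l.map (FreeAlgebra.ι k)).prod) = AtoB k R a * (l.map (ee k R)).prod := by
  refine ⟨LinearEquiv.ofLinear
    { toFun := Ep k R, map_add' := (Ep k R).map_add, map_smul' := by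
        intro a m
        rw [smulM, Ep_rTensor_mulLeft, smulB]
        rfl }
    { toFun := fun z => rho k R z ((1 : RackAlg k R) ⊗ₜ 1),
      map_add' := by intro z w; rw [map_add, LinearMap.add_apply],
      map_smul' := by
        intro a z
        rw [smulB, map_mul, Module.End.mul_apply, rho_AtoB_apply]
        rfl }
    (by apply LinearMap.ext; intro z; exact Ep_inv k R z)
    (by apply LinearMap.ext; intro m; exact inv_Ep k R m), ?_⟩
  intro a l
  rw [LinearEquiv.ofLinear_apply]
  show Ep k R _ = _
  rw [Ep_tmul, TtoB_mon]
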